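/- If N is even and k is odd, then (N/gcd(p,N))·(p(N-p)k/(2N)) is an integer if and only if p is even. Hence the effective center is the index-2 subgroup of Z/NZ generated by 2. -/
import Mathlib


/-- If N is even and k is odd, then for p ∈ {1,…,N-1},
(N/gcd(p,N)) · (p(N-p)k/(2N)) is an integer iff p is even. Hence the effective
center is the index-2 subgroup of ℤ/Nℤ generated by 2. -/
theorem effective_center_N_even_k_odd (N k : ℕ) (hN : 0 < N) (hNeven : Even N)
    (hkodd : Odd k) :
    ∀ p, 1 ≤ p → p ≤ N - 1 →
      ((∃ m : ℤ, ((N / Nat.gcd p N : ℕ) : ℚ) *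
          ((p : ℚ) * ((N : ℚ) - (p : ℚ)) * (k : ℚ) / (2 * (N : ℚ))) = (m : ℚ))
        ↔ Even p) := by
  intro p hp1 hpN
  have hN0 : (N : ℚ) ≠ 0 := Nat.cast_ne_zero.mpr hN.ne'
  set d := Nat.gcd p N with hd
  have hdN : d ∣ N := Nat.gcd_dvd_right p N
  have hd0 : 0 < d := Nat.gcd_pos_of_pos_right p hN
  obtain ⟨q, hq⟩ : d ∣ p := Nat.gcd_dvd_left p N
  have hpleN : p ≤ N := le_trans hpN (Nat.sub_le N 1)
  have hd0' : (d : ℚ) ≠ 0 := Nat.cast_ne_zero.mpr hd0.ne'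
  have hcast : ((N / d : ℕ) : ℚ) * ((p : ℚ) * ((N : ℚ) - (p : ℚ)) * (k : ℚ) / (2 * (N : ℚ)))
      = ((q * (N - p) * k : ℕ) : ℚ) / 2 := by
    have hsub : ((N - p : ℕ) : ℚ) = (N : ℚ) - p := by
      push_cast [Nat.cast_sub hpleN]; ring
    rw [Nat.cast_div hdN hd0', Nat.cast_mul, Nat.cast_mul, hsub, hq]
    push_cast
    field_simp
  rw [hcast]
  constructor
  · rintro ⟨m, hm⟩
    have h2 : ((q * (N - p) * k : ℕ) : ℚ) = 2 * m := by
      rw [div_eq_iff (two_ne_zero)] at hm; linarith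
    have h2' : ((q * (N - p) * k : ℕ) : ℤ) = 2 * m := by exact_mod_cast h2
    have hdvd : 2 ∣ q * (N - p) * k := by
      have : (2 : ℤ) ∣ ((q * (N - p) * k : ℕ) : ℤ) := ⟨m, h2'⟩
      exact_mod_cast this
    by_contra hpe
    have hpodd : Odd p := Nat.not_even_iff_odd.mp hpe
    have hqodd : Odd q := by
      rcases Nat.even_or_odd q with he | ho
      · exact absurd (hq ▸ he.mul_left d) (Nat.not_even_iff_odd.mpr hpodd)
      · exact ho
    have hNp : Odd (N - p) := Nat.Even.sub_odd hpleN hNeven hpodd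
    have : Odd (q * (N - p) * k) := (hqodd.mul hNp).mul hkodd
    exact (Nat.not_even_iff_odd.mpr this) (even_iff_two_dvd.mpr hdvd)
  · intro hpe
    have hNp : Even (N - p) := by
      rw [even_iff_two_dvd] at *
      exact Nat.dvd_sub hNeven hpe
    obtain ⟨t, ht⟩ := hNp
    refine ⟨(q * t * k : ℕ), ?_⟩
    push_cast [ht]
    ring
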